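/- Let α > −1 be real and define, for integers m, p ≥ 0 and n = m + 2p, J_{nm}^{α}(ρ) = ((α+1)_{p+m}/(p+m)!) · ρ^m P_p^{(α,m)}(2ρ²−1), with the conventions J_{nm}^{α} = 0 whenever n < m and J_{00}^{α} = 1. Then for all integers n, m ≥ 0 with n + 1 − m even and nonnegative, and every ρ ∈ [0,1], J_{n+1,m}^{α}(ρ) = ((n+α+1)/(n+1)) ρ [ J_{n,|m−1|}^{α}(ρ) + J_{n,m+1}^{α}(ρ) ] − ((n+2α+1)/(n+1)) J_{n−1,m}^{α}(ρ). In particular, for α = 0 this reduces to the Shakibaei–Paramesran recursion ²R_n^{m,0}(ρ) = ρ[²R_{n−1}^{|m−1|,0}(ρ) + ²R_{n−1}^{m+1,0}(ρ)] − ²R_{n−2}^{m,0}(ρ) for the radial parts of the standard 2D Zernike circle polynomials. -/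

import Mathlib

open Real MeasureTheory

noncomputable def genBinom (a : ℝ) (p : ℕ) : ℝ :=
  (∏ j ∈ Finset.range p, (a - j)) / (Nat.factorial p : ℝ)

noncomputable def jacobiP (k : ℕ) (a b : ℝ) (x : ℝ) : ℝ :=
  ∑ j ∈ Finset.range (k + 1),
    genBinom ((k : ℝ) + a) (k - j) * genBinom ((k : ℝ) + b) j *
      ((x - 1) / 2) ^ j * ((x + 1) / 2) ^ (k - j)

/-- generalized Pochhammer symbol `(x)_α = Γ(x+α)/Γ(x)` -/
noncomputable def pochG (x α : ℝ) : ℝ := Real.Gamma (x + α) / Real.Gamma x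

/-- integer-order Pochhammer symbol `(x)_k = x(x+1)⋯(x+k−1)` -/
noncomputable def pochN (x : ℝ) (k : ℕ) : ℝ := ∏ j ∈ Finset.range k, (x + j)

/-- generalized 3D Zernike radial function `R_{l+2p}^{l,α}` -/
noncomputable def R3 (α : ℝ) (l p : ℕ) (ρ : ℝ) : ℝ :=
  ρ ^ l * (1 - ρ ^ 2) ^ α * jacobiP p α ((l : ℝ) + 1 / 2) (2 * ρ ^ 2 - 1)

/-- generalized 2D Zernike radial function `²R_{m+2p}^{m,α}` -/
noncomputable def R2 (α : ℝ) (m p : ℕ) (ρ : ℝ) : ℝ :=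
  ρ ^ m * (1 - ρ ^ 2) ^ α * jacobiP p α (m : ℝ) (2 * ρ ^ 2 - 1)

/-- spherical Bessel function of real order `a` -/
noncomputable def sphBessel (a : ℝ) (z : ℝ) : ℝ :=
  Real.sqrt π / 2 * (z / 2) ^ a *
    ∑' k : ℕ, (-(z ^ 2) / 4) ^ k / ((Nat.factorial k : ℝ) * Real.Gamma ((k : ℝ) + a + 3 / 2))

/-- Gegenbauer polynomial `C_n^λ` -/
noncomputable def gegenbauer (n : ℕ) (lam : ℝ) (x : ℝ) : ℝ :=
  ∑ k ∈ Finset.range (n / 2 + 1),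
    (-1) ^ k * Real.Gamma (((n - k : ℕ) : ℝ) + lam) /
      (Real.Gamma lam * (Nat.factorial k : ℝ) * (Nat.factorial (n - 2 * k) : ℝ)) *
      (2 * x) ^ (n - 2 * k)

/-- Legendre polynomial `P_l` -/
noncomputable def legendreFun (l : ℕ) (x : ℝ) : ℝ :=
  (1 / 2 ^ l) * ∑ k ∈ Finset.range (l + 1),
    ((Nat.choose l k : ℝ)) ^ 2 * (x - 1) ^ (l - k) * (x + 1) ^ k

/-- associated Legendre function `P_l^m` -/
noncomputable def assocLegendre (l m : ℕ) (x : ℝ) : ℝ :=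
  (1 - x ^ 2) ^ ((m : ℝ) / 2) * iteratedDeriv m (legendreFun l) x

/-- spherical harmonic `Y_l^m`, evaluated at a (unit) vector `v ∈ ℝ³`:
`cos θ = v 2`, `φ = arg (v 0 + i v 1)`. -/
noncomputable def sphHarm (l : ℕ) (m : ℤ) (v : EuclideanSpace ℝ (Fin 3)) : ℂ :=
  (-1 : ℂ) ^ m *
    (Real.sqrt ((2 * l + 1) / (4 * π) *
      (Nat.factorial (l - m.natAbs) : ℝ) / (Nat.factorial (l + m.natAbs) : ℝ)) : ℝ) *
    (assocLegendre l m.natAbs (v 2) : ℝ) *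
    Complex.exp (Complex.I * m * (Complex.arg (v 0 + Complex.I * v 1) : ℝ))

/-- generalized 3D Zernike function `Z_{nl}^{m,α}` on ℝ³ -/
noncomputable def Z3 (α : ℝ) (l p : ℕ) (m : ℤ) (ω : EuclideanSpace ℝ (Fin 3)) : ℂ :=
  (R3 α l p ‖ω‖ : ℝ) * sphHarm l m (‖ω‖⁻¹ • ω)

/-- `J_{nm}^α(ρ) = ((α+1)_{p+m}/(p+m)!) ρ^m P_p^{(α,m)}(2ρ²−1)` for `n = m + 2p`,
with the convention `J_{nm}^α = 0` when `n < m` (in particular `J_{−1,m}^α = 0`). -/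
noncomputable def Jfun (α : ℝ) (n : ℤ) (m : ℕ) (ρ : ℝ) : ℝ :=
  if n < (m : ℤ) then 0
  else
    pochN (α + 1) (((n - m) / 2).toNat + m) / (Nat.factorial (((n - m) / 2).toNat + m) : ℝ) *
      ρ ^ m * jacobiP ((n - m) / 2).toNat α (m : ℝ) (2 * ρ ^ 2 - 1)

/-!
In `u = (x - 1) / 2` and `v = (x + 1) / 2` (so `v - u = 1`) the Jacobi polynomial is
`∑ⱼ C(p + a, p - j) C(p + b, j) uʲ vᵖ⁻ʲ`, so Pascal's rule and the absorption identity
`(k + 1) C(a + 1, k + 1) = (a + 1) C(a, k)` for generalized binomial coefficients give, term by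
term, contiguous relations valid for all real parameters. With `x = 2ρ² - 1` and
`n + 1 = m + 2p`, the recursion for `J` is a linear combination of three of them when
`m, p ≥ 1` and of one when `m = 0` (then `|m - 1| = m + 1`); when `p = 0` it is the recursion
`(k + 1) cₖ₊₁ = (α + 1 + k) cₖ` of the normalisation `cₖ = (α + 1)ₖ / k!`.
-/

theorem genBinom_eq_choose (a : ℝ) (k : ℕ) : genBinom a k = Ring.choose a k := by
  rw [Ring.choose_eq_smul, ← Polynomial.aeval_eq_smeval, Polynomial.aeval_def,
    ← Polynomial.eval_map, descPochhammer_map, descPochhammer_eval_eq_prod_range, genBinom,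
    smul_eq_mul, inv_mul_eq_div]

theorem genBinom_zero_right (a : ℝ) : genBinom a 0 = 1 := by
  simp [genBinom]

theorem genBinom_succ_succ (a : ℝ) (k : ℕ) :
    genBinom (a + 1) (k + 1) = genBinom a k + genBinom a (k + 1) := by
  simp only [genBinom_eq_choose, Ring.choose_succ_succ]

theorem succ_mul_genBinom_succ_succ (a : ℝ) (k : ℕ) :
    ((k : ℝ) + 1) * genBinom (a + 1) (k + 1) = (a + 1) * genBinom a k := by
  simpa [genBinom_eq_choose, Ring.choose_one_right] using
    Ring.choose_smul_choose (a + 1) (Nat.le_add_left 1 k)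

theorem jacobiP_zero (a b x : ℝ) : jacobiP 0 a b x = 1 := by
  simp [jacobiP, genBinom_zero_right]

theorem jacobiP_succ_add_one_left (p : ℕ) (a b x : ℝ) :
    jacobiP (p + 1) (a + 1) b x
      = jacobiP (p + 1) a b x + (x + 1) / 2 * jacobiP p (a + 1) (b + 1) x := by
  simp only [jacobiP]
  rw [Finset.sum_range_succ _ (p + 1), Finset.sum_range_succ _ (p + 1), Finset.mul_sum,
    add_right_comm, ← Finset.sum_add_distrib]
  congr 1
  · refine Finset.sum_congr rfl fun j hj => ?_
    rw [show p + 1 - j = p - j + 1 by have := Finset.mem_range.1 hj; omega, ← add_assoc,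
      genBinom_succ_succ, show (p : ℝ) + (a + 1) = ((p + 1 : ℕ) : ℝ) + a by push_cast; ring,
      show (p : ℝ) + (b + 1) = ((p + 1 : ℕ) : ℝ) + b by push_cast; ring]
    ring
  · simp [genBinom_zero_right]

theorem jacobiP_succ_add_one_right (p : ℕ) (a b x : ℝ) :
    jacobiP (p + 1) a (b + 1) x
      = jacobiP (p + 1) a b x + (x - 1) / 2 * jacobiP p (a + 1) (b + 1) x := by
  simp only [jacobiP]
  rw [Finset.sum_range_succ' _ (p + 1), Finset.sum_range_succ' _ (p + 1), Finset.mul_sum,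
    add_right_comm, ← Finset.sum_add_distrib]
  congr 1
  · refine Finset.sum_congr rfl fun j hj => ?_
    rw [← add_assoc, genBinom_succ_succ,
      show (p : ℝ) + (a + 1) = ((p + 1 : ℕ) : ℝ) + a by push_cast; ring,
      show (p : ℝ) + (b + 1) = ((p + 1 : ℕ) : ℝ) + b by push_cast; ring,
      show p + 1 - (j + 1) = p - j by omega]
    ring

theorem jacobiP_contiguous (p : ℕ) (a b x : ℝ) :
    jacobiP p a b x
      = (x + 1) / 2 * jacobiP p a (b + 1) x - (x - 1) / 2 * jacobiP p (a + 1) b x := by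
  cases p with
  | zero => simp only [jacobiP_zero]; ring
  | succ p =>
    rw [jacobiP_succ_add_one_left, jacobiP_succ_add_one_right]
    ring

theorem succ_mul_jacobiP_succ (p : ℕ) (a b x : ℝ) :
    ((p : ℝ) + 1) * jacobiP (p + 1) a b x
      = ((p : ℝ) + 1 + a) * ((x + 1) / 2) * jacobiP p a (b + 1) x
        + ((p : ℝ) + 1 + b) * ((x - 1) / 2) * jacobiP p (a + 1) b x := by
  set T : ℕ → ℝ := fun j => genBinom (((p + 1 : ℕ) : ℝ) + a) (p + 1 - j) *
    genBinom (((p + 1 : ℕ) : ℝ) + b) j * ((x - 1) / 2) ^ j * ((x + 1) / 2) ^ (p + 1 - j)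
  have left : ∑ j ∈ Finset.range (p + 2), ((p + 1 - j : ℕ) : ℝ) * T j
      = ((p : ℝ) + 1 + a) * ((x + 1) / 2) * jacobiP p a (b + 1) x := by
    rw [Finset.sum_range_succ, Nat.sub_self, Nat.cast_zero, zero_mul, add_zero, jacobiP,
      Finset.mul_sum]
    refine Finset.sum_congr rfl fun j hj => ?_
    have hj : j ≤ p := Nat.lt_succ_iff.1 (Finset.mem_range.1 hj)
    dsimp only [T]
    rw [show p + 1 - j = p - j + 1 by omega, Nat.cast_succ,
      show ((p + 1 : ℕ) : ℝ) + a = (p + a) + 1 by push_cast; ring,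
      show (p : ℝ) + (b + 1) = ((p + 1 : ℕ) : ℝ) + b by push_cast; ring]
    linear_combination (genBinom (((p + 1 : ℕ) : ℝ) + b) j * ((x - 1) / 2) ^ j *
      ((x + 1) / 2) ^ (p - j + 1)) * succ_mul_genBinom_succ_succ ((p : ℝ) + a) (p - j)
  have right : ∑ j ∈ Finset.range (p + 2), (j : ℝ) * T j
      = ((p : ℝ) + 1 + b) * ((x - 1) / 2) * jacobiP p (a + 1) b x := by
    rw [Finset.sum_range_succ', Nat.cast_zero, zero_mul, add_zero, jacobiP, Finset.mul_sum]
    refine Finset.sum_congr rfl fun j _ => ?_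
    dsimp only [T]
    rw [Nat.cast_succ, show ((p + 1 : ℕ) : ℝ) + b = (p + b) + 1 by push_cast; ring,
      show (p : ℝ) + (a + 1) = ((p + 1 : ℕ) : ℝ) + a by push_cast; ring,
      show p + 1 - (j + 1) = p - j by omega]
    linear_combination (genBinom (((p + 1 : ℕ) : ℝ) + a) (p - j) * ((x - 1) / 2) ^ (j + 1) *
      ((x + 1) / 2) ^ (p - j)) * succ_mul_genBinom_succ_succ ((p : ℝ) + b) j
  rw [← left, ← right, jacobiP, Finset.mul_sum, ← Finset.sum_add_distrib]
  refine Finset.sum_congr rfl fun j hj => ?_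
  rw [Nat.cast_sub (Nat.lt_succ_iff.1 (Finset.mem_range.1 hj))]
  push_cast [T]
  ring

theorem jacobiP_succ_contiguous (p : ℕ) (a b x : ℝ) :
    (2 * p + a + b + 2) * ((x + 1) / 2) * jacobiP p a (b + 1) x
      = (p + b + 1) * jacobiP p a b x + (p + 1) * jacobiP (p + 1) a b x := by
  linear_combination
    -(p + b + 1) * jacobiP_contiguous p a b x - succ_mul_jacobiP_succ p a b x
theorem jacobiP_zernike_recurrence (p : ℕ) (a b x : ℝ) :
    (p + b + 2 + a) * (2 * p + b + 3) * jacobiP (p + 1) a (b + 1) x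
      = (2 * p + b + 3 + a) * ((p + b + 2) * jacobiP (p + 1) a b x
          + (p + b + 2 + a) * ((x + 1) / 2) * jacobiP p a (b + 2) x)
        - (2 * p + b + 3 + 2 * a) * (p + b + 2) * jacobiP p a (b + 1) x := by
  have E := succ_mul_jacobiP_succ p a (b + 1) x
  have T := jacobiP_contiguous p a (b + 1) x
  have S := jacobiP_succ_add_one_right p a b x
  rw [add_assoc b 1 1, one_add_one_eq_two] at E T
  linear_combination a * E + (2 * p + b + 3 + 2 * a) * (p + b + 2) * T
    + (2 * p + b + 3 + a) * (p + b + 2) * S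


noncomputable def Jcoeff (α : ℝ) (k : ℕ) : ℝ := pochN (α + 1) k / (Nat.factorial k : ℝ)

theorem Jcoeff_succ (α : ℝ) (k : ℕ) :
    Jcoeff α (k + 1) = (α + 1 + k) / (k + 1) * Jcoeff α k := by
  have := Nat.factorial_pos k
  simp only [Jcoeff, pochN, Finset.prod_range_succ, Nat.factorial_succ]
  push_cast
  field_simp

theorem Jfun_eq (α ρ : ℝ) (n : ℤ) (m p : ℕ) (h : n = m + 2 * p) :
    Jfun α n m ρ = Jcoeff α (p + m) * ρ ^ m * jacobiP p α m (2 * ρ ^ 2 - 1) := by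
  rw [Jfun, if_neg (by omega), show ((n - m) / 2).toNat = p by omega, Jcoeff]

theorem Jfun_of_lt (α ρ : ℝ) {n : ℤ} {m : ℕ} (h : n < m) : Jfun α n m ρ = 0 :=
  if_pos h

theorem Jfun_recurrence (α : ℝ) (n m : ℕ) (hle : m ≤ n + 1) (hpar : Even (n + 1 - m))
    (ρ : ℝ) :
    Jfun α ((n : ℤ) + 1) m ρ
      = ((n : ℝ) + α + 1) / ((n : ℝ) + 1) * ρ *
          (Jfun α (n : ℤ) ((m : ℤ) - 1).natAbs ρ + Jfun α (n : ℤ) (m + 1) ρ)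
        - ((n : ℝ) + 2 * α + 1) / ((n : ℝ) + 1) * Jfun α ((n : ℤ) - 1) m ρ := by
  obtain ⟨p, hp⟩ : ∃ p, n + 1 = m + 2 * p := by
    obtain ⟨r, hr⟩ := hpar
    exact ⟨r, by omega⟩
  rcases p with _ | p
  · obtain rfl : m = n + 1 := by omega
    rw [Jfun_eq α ρ _ (n + 1) 0 (by push_cast; ring),
      show ((n + 1 : ℕ) - 1 : ℤ).natAbs = n by omega, Jfun_eq α ρ _ n 0 (by ring),
      Jfun_of_lt α ρ (by omega), Jfun_of_lt α ρ (by omega), jacobiP_zero, jacobiP_zero,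
      zero_add, zero_add, Jcoeff_succ]
    field_simp
    ring
  rcases m with _ | b
  · obtain rfl : n = 2 * p + 1 := by omega
    rw [Jfun_eq α ρ _ 0 (p + 1) (by push_cast; ring),
      show ((0 : ℕ) - 1 : ℤ).natAbs = 1 by rfl, Jfun_eq α ρ _ 1 p (by push_cast; ring), Jfun_eq α ρ _ 0 p (by push_cast; ring)]
    have R := jacobiP_succ_contiguous p α 0 (2 * ρ ^ 2 - 1)
    simp only [Nat.cast_zero, Nat.cast_one, add_zero, zero_add] at R ⊢
    rw [Jcoeff_succ]
    push_cast
    field_simp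
    linear_combination -2 * (α + 1 + p) * Jcoeff α p * R
  · obtain rfl : n = b + 2 * p + 2 := by omega
    rw [Jfun_eq α ρ _ (b + 1) (p + 1) (by push_cast; ring),
      show ((b + 1 : ℕ) - 1 : ℤ).natAbs = b by omega,
      Jfun_eq α ρ _ b (p + 1) (by push_cast; ring),
      Jfun_eq α ρ _ (b + 1 + 1) p (by push_cast; ring),
      Jfun_eq α ρ _ (b + 1) p (by push_cast; ring),
      show p + 1 + (b + 1) = p + b + 1 + 1 by ring, show p + (b + 1 + 1) = p + b + 1 + 1 by ring,
      show p + 1 + b = p + b + 1 by ring, show p + (b + 1) = p + b + 1 by ring, Jcoeff_succ]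
    have J := jacobiP_zernike_recurrence p α b (2 * ρ ^ 2 - 1)
    push_cast
    rw [show (b : ℝ) + 1 + 1 = b + 2 by ring]
    field_simp
    linear_combination Jcoeff α (p + b + 1) * ρ ^ (b + 1) * J

theorem stmt13_general (α : ℝ) (n m : ℕ) (hle : m ≤ n + 1) (hpar : Even (n + 1 - m))
    (ρ : ℝ) :
    (Jfun α ((n : ℤ) + 1) m ρ
      = ((n : ℝ) + α + 1) / ((n : ℝ) + 1) * ρ *
          (Jfun α (n : ℤ) ((m : ℤ) - 1).natAbs ρ + Jfun α (n : ℤ) (m + 1) ρ)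
        - ((n : ℝ) + 2 * α + 1) / ((n : ℝ) + 1) * Jfun α ((n : ℤ) - 1) m ρ)
    ∧ (Jfun 0 ((n : ℤ) + 1) m ρ
      = ρ * (Jfun 0 (n : ℤ) ((m : ℤ) - 1).natAbs ρ + Jfun 0 (n : ℤ) (m + 1) ρ)
        - Jfun 0 ((n : ℤ) - 1) m ρ) := by
  refine ⟨Jfun_recurrence α n m hle hpar ρ, ?_⟩
  have h := Jfun_recurrence 0 n m hle hpar ρ
  rwa [add_zero, mul_zero, add_zero, div_self (by positivity), one_mul, one_mul] at h

/-- the recursion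
`J_{n+1,m}^α = ((n+α+1)/(n+1)) ρ [J_{n,|m−1|}^α + J_{n,m+1}^α] − ((n+2α+1)/(n+1)) J_{n−1,m}^α`
for `n + 1 − m` even and nonnegative; in particular, for `α = 0` it reduces to the
Shakibaei–Paramesran recursion for the radial parts `²R_n^{m,0} = J_{nm}^0` of the standard
2D Zernike circle polynomials. -/
theorem stmt13 (α : ℝ) (hα : -1 < α) (n m : ℕ) (hle : m ≤ n + 1) (hpar : Even (n + 1 - m))
    (ρ : ℝ) (hρ : ρ ∈ Set.Icc (0:ℝ) 1) :
    (Jfun α ((n : ℤ) + 1) m ρ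
      = ((n : ℝ) + α + 1) / ((n : ℝ) + 1) * ρ *
          (Jfun α (n : ℤ) ((m : ℤ) - 1).natAbs ρ + Jfun α (n : ℤ) (m + 1) ρ)
        - ((n : ℝ) + 2 * α + 1) / ((n : ℝ) + 1) * Jfun α ((n : ℤ) - 1) m ρ)
    ∧ (Jfun 0 ((n : ℤ) + 1) m ρ
      = ρ * (Jfun 0 (n : ℤ) ((m : ℤ) - 1).natAbs ρ + Jfun 0 (n : ℤ) (m + 1) ρ)
        - Jfun 0 ((n : ℤ) - 1) m ρ) :=
  stmt13_general α n m hle hpar ρ
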